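/- arXiv:2311.10017 — 2 statements merged into one kernel-verified Lean document; each statement's English description precedes it below -/
import Mathlib

section
/- Let A be a bounded distributive lattice with □₊ : A → A satisfying □₊(a ⊓ b) = □₊a ⊓ □₊b and □₊⊤ = ⊤, and □₋ : A → A satisfying □₋(a ⊔ b) = □₋a ⊓ □₋b and □₋⊥ = ⊤, such that □₋a ⊓ □₊(a ⊔ b) ≤ □₊b for all a, b ∈ A. Let U, V be prime filters of A such that □₊a ∈ U implies a ∈ V for all a. Then there exists a prime filter V' with V' ⊆ V such that □₊a ∈ U implies a ∈ V' for all a, and □₋a ∈ U implies a ∉ V' for all a. -/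
/-- A prime filter of a bounded distributive lattice. -/
def IsPrimeFilter {A : Type*} [DistribLattice A] [BoundedOrder A] (F : Set A) : Prop :=
  (∀ a b : A, a ∈ F → a ≤ b → b ∈ F) ∧
  (∀ a b : A, a ∈ F → b ∈ F → a ⊓ b ∈ F) ∧
  (⊤ : A) ∈ F ∧ (⊥ : A) ∉ F ∧
  (∀ a b : A, a ⊔ b ∈ F → a ∈ F ∨ b ∈ F)

/-!
The set `F = {a | □₊a ∈ U}` is a filter, and the ideal `I` generated by
`{a | □₋a ∈ U}` and the complement of `V` consists of the elements below some `m ⊔ c` with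
`□₋m ∈ U` and `c ∉ V`. They are disjoint: if `a ∈ F` and `a ≤ m ⊔ c`, then
`□₋m ⊓ □₊(m ⊔ c) ∈ U`, so the axiom gives `□₊c ∈ U` and hence `c ∈ V`. The prime ideal theorem
yields a prime ideal `J ⊇ I` disjoint from `F`, and `V' = Jᶜ` is the required prime filter.
-/

namespace Order

variable {A B : Type*}

theorem PFilter.isPFilter_preimage [SemilatticeInf A] [OrderTop A] [SemilatticeInf B]
    [OrderTop B] (F : PFilter B) {f : A → B} (hf : ∀ a b, f (a ⊓ b) = f a ⊓ f b)
    (htop : f ⊤ = ⊤) : IsPFilter (f ⁻¹' F) := by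
  have hmono : Monotone f := OrderHomClass.mono (InfHom.mk f hf)
  refine .of_def ⟨⊤, by simp [htop]⟩ (fun a ha b hb => ⟨a ⊓ b, ?_, inf_le_left, inf_le_right⟩)
    (fun hab ha => F.mem_of_le (hmono hab) ha)
  rw [Set.mem_preimage, hf]
  exact F.inf_mem ha hb

theorem PFilter.isIdeal_preimage [SemilatticeSup A] [OrderBot A] [SemilatticeInf B]
    [OrderTop B] (F : PFilter B) {g : A → B} (hg : ∀ a b, g (a ⊔ b) = g a ⊓ g b)
    (hbot : g ⊥ = ⊤) : IsIdeal (g ⁻¹' F) := by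
  have hanti : Antitone g := OrderHomClass.mono (SupHom.mk (β := Bᵒᵈ) (OrderDual.toDual ∘ g) hg)
  refine ⟨fun a b hba ha => F.mem_of_le (hanti hba) ha, ⟨⊥, by simp [hbot]⟩,
    fun a ha b hb => ⟨a ⊔ b, ?_, le_sup_left, le_sup_right⟩⟩
  rw [Set.mem_preimage, hg]
  exact F.inf_mem ha hb

end Order

open Order

section PrimeFilter

variable {A : Type*} [DistribLattice A] [BoundedOrder A] {F : Set A}

theorem IsPrimeFilter.isPFilter (hF : IsPrimeFilter F) : IsPFilter F :=
  let ⟨upper, inf_mem, top_mem, _⟩ := hF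
  .of_def ⟨⊤, top_mem⟩ (fun a ha b hb => ⟨a ⊓ b, inf_mem a b ha hb, inf_le_left, inf_le_right⟩)
    (fun hab ha => upper _ _ ha hab)

theorem IsPrimeFilter.isIdeal_compl (hF : IsPrimeFilter F) : IsIdeal Fᶜ :=
  let ⟨upper, _, _, bot_notMem, prime⟩ := hF
  ⟨fun a b hba ha hb => ha (upper b a hb hba), ⟨⊥, bot_notMem⟩,
    fun a ha b hb => ⟨a ⊔ b, fun hab => (prime a b hab).elim ha hb, le_sup_left, le_sup_right⟩⟩

theorem Order.Ideal.IsPrime.isPrimeFilter_compl {J : Ideal A} (hJ : J.IsPrime) :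
    IsPrimeFilter (J : Set A)ᶜ :=
  ⟨fun _ _ ha hab => Ideal.mem_compl_of_ge hab ha,
    fun _ _ ha hb hab => (hJ.mem_or_mem hab).elim ha hb,
    (Ideal.isProper_iff_top_notMem).1 hJ.toIsProper, fun h => h J.bot_mem,
    fun _ _ hab => not_and_or.1 fun h => hab (J.sup_mem h.1 h.2)⟩

end PrimeFilter

theorem stmt10 {A : Type*} [DistribLattice A] [BoundedOrder A]
    (boxp boxm : A → A)
    (hp1 : ∀ a b : A, boxp (a ⊓ b) = boxp a ⊓ boxp b) (hp2 : boxp ⊤ = ⊤)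
    (hm1 : ∀ a b : A, boxm (a ⊔ b) = boxm a ⊓ boxm b) (hm2 : boxm ⊥ = ⊤)
    (hax : ∀ a b : A, boxm a ⊓ boxp (a ⊔ b) ≤ boxp b)
    (U V : Set A) (hU : IsPrimeFilter U) (hV : IsPrimeFilter V)
    (hUV : ∀ a : A, boxp a ∈ U → a ∈ V) :
    ∃ V' : Set A, IsPrimeFilter V' ∧ V' ⊆ V ∧
      (∀ a : A, boxp a ∈ U → a ∈ V') ∧ (∀ a : A, boxm a ∈ U → a ∉ V') := by
  set U' := hU.isPFilter.toPFilter
  set I₁ := (U'.isIdeal_preimage hm1 hm2).toIdeal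
  set I₂ := hV.isIdeal_compl.toIdeal
  set F := (U'.isPFilter_preimage hp1 hp2).toPFilter
  have hFI : Disjoint (F : Set A) (I₁ ⊔ I₂ : Ideal A) := by
    refine Set.disjoint_left.2 fun a ha ⟨m, hm, c, hc, hamc⟩ => hc (hUV c ?_)
    have hmc : boxp (m ⊔ c) ∈ U := F.mem_of_le hamc ha
    exact U'.mem_of_le (hax m c) (U'.inf_mem hm hmc)
  obtain ⟨J, hJ, hIJ, hFJ⟩ := DistribLattice.prime_ideal_of_disjoint_filter_ideal hFI
  refine ⟨(J : Set A)ᶜ, hJ.isPrimeFilter_compl, ?_, fun a ha => Set.disjoint_left.1 hFJ ha,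
    fun a ha haJ => haJ (hIJ (le_sup_left (b := I₂) ha))⟩
  exact Set.compl_subset_comm.1 fun c hc => hIJ (le_sup_right (a := I₁) hc)
end

section
/- Let A be a bounded distributive lattice with □ : A → A satisfying □(a ⊓ b) = □a ⊓ □b and □⊤ = ⊤, and ♦ : A → A satisfying ♦(a ⊔ b) = ♦a ⊔ ♦b and ♦⊥ = ⊥, such that for all a, b, c ∈ A: ♦a ≤ □b ⊔ c implies ♦a ≤ ♦(a ⊓ b) ⊔ c. Let U, V be prime filters of A such that ♦a ∈ U for all a ∈ V. Then there exist prime filters U' and V' with U' ⊆ U and V ⊆ V' such that ♦a ∈ U' for all a ∈ V', and □a ∈ U' implies a ∈ V' for all a. -/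
/-!
Choose `V' ⊇ V` maximal among the filters whose `♦`-image lies in `U`; maximality makes `V'` prime
and gives, for every `a ∉ V'`, some `w ∈ V'` with `♦(w ⊓ a) ∉ U`. Then separate the filter
generated by `♦[V']` from the ideal generated by `□[A ∖ V'] ∪ (A ∖ U)` by a prime filter `U'`.
They are disjoint by the axiom: if `♦v ≤ □a ⊔ c`, then applying it to `v ⊓ w` gives
`♦(v ⊓ w) ≤ ♦(v ⊓ w ⊓ a) ⊔ c`, whose right-hand side lies outside `U`.
-/

open Set

section Separation

variable {A : Type*} [DistribLattice A]

theorem exists_maximal_filter_disjoint {F I : Set A} (hFne : F.Nonempty) (hFup : IsUpperSet F)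
    (hFinf : InfClosed F) (hI : IsLowerSet I) (hFI : Disjoint F I) :
    ∃ G, F ⊆ G ∧ IsUpperSet G ∧ InfClosed G ∧ Disjoint G I ∧
      ∀ a ∉ G, ∃ g ∈ G, g ⊓ a ∈ I := by
  let S : Set (Set A) := {G | F ⊆ G ∧ IsUpperSet G ∧ InfClosed G ∧ Disjoint G I}
  have hchain : ∀ c ⊆ S, IsChain (· ⊆ ·) c → c.Nonempty → ∃ ub ∈ S, ∀ s ∈ c, s ⊆ ub := by
    intro c hcS hc ⟨G₀, hG₀⟩
    refine ⟨⋃₀ c, ⟨(hcS hG₀).1.trans (subset_sUnion_of_mem hG₀),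
      isUpperSet_sUnion fun G hG => (hcS hG).2.1, ?_,
      disjoint_sUnion_left.2 fun G hG => (hcS hG).2.2.2⟩, fun _ => subset_sUnion_of_mem⟩
    rintro a ⟨G, hG, haG⟩ b ⟨G', hG', hbG'⟩
    rcases hc.total hG hG' with h | h
    · exact ⟨G', hG', (hcS hG').2.2.1 (h haG) hbG'⟩
    · exact ⟨G, hG, (hcS hG).2.2.1 haG (h hbG')⟩
  obtain ⟨G, hFG, hmax⟩ := zorn_subset_nonempty S hchain F ⟨subset_rfl, hFup, hFinf, hFI⟩
  obtain ⟨-, hGup, hGinf, hGI⟩ := hmax.prop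
  refine ⟨G, hFG, hGup, hGinf, hGI, fun a ha => ?_⟩
  by_contra! hmeet
  let G' := {x | ∃ g ∈ G, g ⊓ a ≤ x}
  have hGG' : G ⊆ G' := fun x hx => ⟨x, hx, inf_le_left⟩
  have hG' : G' ∈ S := by
    refine ⟨hFG.trans hGG', ?_, ?_, ?_⟩
    · rintro x y hxy ⟨g, hg, hgx⟩
      exact ⟨g, hg, hgx.trans hxy⟩
    · rintro x ⟨g, hg, hgx⟩ y ⟨g', hg', hgy⟩
      exact ⟨g ⊓ g', hGinf hg hg', le_inf
        ((inf_le_inf_right a inf_le_left).trans hgx) ((inf_le_inf_right a inf_le_right).trans hgy)⟩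
    · exact disjoint_left.2 fun x ⟨g, hg, hgx⟩ hxI => hmeet g hg (hI hgx hxI)
  obtain ⟨g, hg⟩ := hFne.mono hFG
  have haG' : a ∈ G' := ⟨g, hg, inf_le_right⟩
  exact ha ((hmax.eq_of_ge hG' hGG').subset haG')

theorem mem_or_mem_of_sup_mem {G I : Set A} (hGinf : InfClosed G) (hI : IsLowerSet I)
    (hIsup : SupClosed I) (hGI : Disjoint G I) (hmax : ∀ a ∉ G, ∃ g ∈ G, g ⊓ a ∈ I) {a b : A}
    (hab : a ⊔ b ∈ G) : a ∈ G ∨ b ∈ G := by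
  by_contra! ⟨ha, hb⟩
  obtain ⟨g, hg, hga⟩ := hmax a ha
  obtain ⟨g', hg', hgb⟩ := hmax b hb
  have hle : g ⊓ g' ⊓ (a ⊔ b) ≤ g ⊓ a ⊔ g' ⊓ b := by
    rw [inf_sup_left]
    exact sup_le_sup (inf_le_inf_right a inf_le_left) (inf_le_inf_right b inf_le_right)
  exact disjoint_left.1 hGI (hGinf (hGinf hg hg') hab) (hI hle (hIsup hga hgb))

theorem exists_isPrimeFilter_of_disjoint [BoundedOrder A] {F I : Set A} (hFne : F.Nonempty)
    (hFup : IsUpperSet F) (hFinf : InfClosed F) (hI : IsLowerSet I) (hIsup : SupClosed I)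
    (hIbot : ⊥ ∈ I) (hFI : Disjoint F I) :
    ∃ G, IsPrimeFilter G ∧ F ⊆ G ∧ Disjoint G I ∧ ∀ a ∉ G, ∃ g ∈ G, g ⊓ a ∈ I := by
  obtain ⟨G, hFG, hGup, hGinf, hGI, hmax⟩ := exists_maximal_filter_disjoint hFne hFup hFinf hI hFI
  obtain ⟨f, hf⟩ := hFne
  refine ⟨G, ⟨fun a b ha hab => hGup hab ha, fun a b ha hb => hGinf ha hb,
    hGup le_top (hFG hf), fun hbot => disjoint_left.1 hGI hbot hIbot,
    fun a b => mem_or_mem_of_sup_mem hGinf hI hIsup hGI hmax⟩, hFG, hGI, hmax⟩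

namespace IsPrimeFilter

variable [BoundedOrder A] {F : Set A}

theorem isUpperSet (hF : IsPrimeFilter F) : IsUpperSet F := fun a b hab ha => hF.1 a b ha hab

theorem infClosed (hF : IsPrimeFilter F) : InfClosed F := fun a ha b hb => hF.2.1 a b ha hb

theorem top_mem (hF : IsPrimeFilter F) : ⊤ ∈ F := hF.2.2.1

theorem bot_notMem (hF : IsPrimeFilter F) : ⊥ ∉ F := hF.2.2.2.1

theorem supClosed_compl (hF : IsPrimeFilter F) : SupClosed Fᶜ :=
  fun a ha b hb hab => (hF.2.2.2.2 a b hab).elim ha hb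

end IsPrimeFilter

end Separation

section Modal

variable {A : Type*} [DistribLattice A] [BoundedOrder A] {box dia : A → A} {U V : Set A}

theorem exists_isPrimeFilter_superset_dia_mem (hd1 : ∀ a b : A, dia (a ⊔ b) = dia a ⊔ dia b)
    (hd2 : dia ⊥ = ⊥) (hU : IsPrimeFilter U) (hV : IsPrimeFilter V)
    (hUV : ∀ a ∈ V, dia a ∈ U) :
    ∃ V', IsPrimeFilter V' ∧ V ⊆ V' ∧ (∀ a ∈ V', dia a ∈ U) ∧
      ∀ a ∉ V', ∃ w ∈ V', dia (w ⊓ a) ∉ U := by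
  have hIsup : SupClosed (dia ⁻¹' Uᶜ) := fun a ha b hb => by
    simpa only [mem_preimage, hd1] using hU.supClosed_compl ha hb
  obtain ⟨V', hV', hVV', hV'I, hmax⟩ := exists_isPrimeFilter_of_disjoint ⟨⊤, hV.top_mem⟩
    hV.isUpperSet hV.infClosed (hU.isUpperSet.compl.preimage (Monotone.of_map_sup hd1)) hIsup
    (by simpa only [mem_preimage, mem_compl_iff, hd2] using hU.bot_notMem)
    (disjoint_left.2 fun a ha h => h (hUV a ha))
  exact ⟨V', hV', hVV', fun a ha => not_not.1 (disjoint_left.1 hV'I ha), hmax⟩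

theorem dia_not_le_box_sup (hd1 : ∀ a b : A, dia (a ⊔ b) = dia a ⊔ dia b)
    (hax : ∀ a b c : A, dia a ≤ box b ⊔ c → dia a ≤ dia (a ⊓ b) ⊔ c) (hU : IsPrimeFilter U)
    {V' : Set A} (hV' : InfClosed V') (hV'U : ∀ a ∈ V', dia a ∈ U)
    (hmax : ∀ a ∉ V', ∃ w ∈ V', dia (w ⊓ a) ∉ U) {v a c : A} (hv : v ∈ V') (ha : a ∉ V')
    (hc : c ∉ U) : ¬ dia v ≤ box a ⊔ c := by
  intro hle
  have hdia := Monotone.of_map_sup hd1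
  obtain ⟨w, hw, hwa⟩ := hmax a ha
  have hvw : dia (v ⊓ w) ≤ dia (v ⊓ w ⊓ a) ⊔ c := hax _ a c ((hdia inf_le_left).trans hle)
  have hwa' : dia (v ⊓ w ⊓ a) ∉ U := fun h =>
    hwa (hU.isUpperSet (hdia (inf_le_inf_right a inf_le_right)) h)
  exact hU.supClosed_compl hwa' hc (hU.isUpperSet hvw (hV'U _ (hV' hv hw)))

theorem exists_isPrimeFilter_subset_box_mem (hb1 : ∀ a b : A, box (a ⊓ b) = box a ⊓ box b)
    (hd1 : ∀ a b : A, dia (a ⊔ b) = dia a ⊔ dia b)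
    (hax : ∀ a b c : A, dia a ≤ box b ⊔ c → dia a ≤ dia (a ⊓ b) ⊔ c) (hU : IsPrimeFilter U)
    {V' : Set A} (hV' : IsPrimeFilter V') (hV'U : ∀ a ∈ V', dia a ∈ U)
    (hmax : ∀ a ∉ V', ∃ w ∈ V', dia (w ⊓ a) ∉ U) :
    ∃ U', IsPrimeFilter U' ∧ U' ⊆ U ∧ (∀ a ∈ V', dia a ∈ U') ∧ ∀ a, box a ∈ U' → a ∈ V' := by
  have hdia := Monotone.of_map_sup hd1
  have hbox := Monotone.of_map_inf hb1
  let F := {x | ∃ v ∈ V', dia v ≤ x}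
  let I := {x | ∃ a ∉ V', ∃ c ∉ U, x ≤ box a ⊔ c}
  have hFup : IsUpperSet F := fun x y hxy ⟨v, hv, hvx⟩ => ⟨v, hv, hvx.trans hxy⟩
  have hFinf : InfClosed F := by
    rintro x ⟨v, hv, hvx⟩ y ⟨w, hw, hwy⟩
    exact ⟨v ⊓ w, hV'.infClosed hv hw,
      le_inf ((hdia inf_le_left).trans hvx) ((hdia inf_le_right).trans hwy)⟩
  have hIlow : IsLowerSet I := fun x y hxy ⟨a, ha, c, hc, hy⟩ => ⟨a, ha, c, hc, hxy.trans hy⟩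
  have hIsup : SupClosed I := by
    rintro x ⟨a, ha, c, hc, hx⟩ y ⟨b, hb, d, hd, hy⟩
    refine ⟨a ⊔ b, hV'.supClosed_compl ha hb, c ⊔ d, hU.supClosed_compl hc hd, sup_le ?_ ?_⟩
    · exact hx.trans (sup_le_sup (hbox le_sup_left) le_sup_left)
    · exact hy.trans (sup_le_sup (hbox le_sup_right) le_sup_right)
  have hFI : Disjoint F I := by
    refine disjoint_left.2 fun x ⟨v, hv, hvx⟩ ⟨a, ha, c, hc, hxa⟩ => ?_
    exact dia_not_le_box_sup hd1 hax hU hV'.infClosed hV'U hmax hv ha hc (hvx.trans hxa)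
  have hFne : F.Nonempty := ⟨dia ⊤, ⊤, hV'.top_mem, le_rfl⟩
  have hIbot : ⊥ ∈ I := ⟨⊥, hV'.bot_notMem, ⊥, hU.bot_notMem, bot_le⟩
  obtain ⟨U', hU', hFU', hU'I, -⟩ :=
    exists_isPrimeFilter_of_disjoint hFne hFup hFinf hIlow hIsup hIbot hFI
  refine ⟨U', hU', fun x hx => ?_, fun a ha => hFU' ⟨a, ha, le_rfl⟩, fun a ha => ?_⟩
  · by_contra hxU
    exact disjoint_left.1 hU'I hx ⟨⊥, hV'.bot_notMem, x, hxU, le_sup_right⟩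
  · by_contra haV'
    exact disjoint_left.1 hU'I ha ⟨a, haV', ⊥, hU.bot_notMem, le_sup_left⟩

end Modal

theorem stmt12_general {A : Type*} [DistribLattice A] [BoundedOrder A]
    (box dia : A → A)
    (hb1 : ∀ a b : A, box (a ⊓ b) = box a ⊓ box b)
    (hd1 : ∀ a b : A, dia (a ⊔ b) = dia a ⊔ dia b) (hd2 : dia ⊥ = ⊥)
    (hax : ∀ a b c : A, dia a ≤ box b ⊔ c → dia a ≤ dia (a ⊓ b) ⊔ c)
    (U V : Set A) (hU : IsPrimeFilter U) (hV : IsPrimeFilter V)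
    (hUV : ∀ a : A, a ∈ V → dia a ∈ U) :
    ∃ U' V' : Set A, IsPrimeFilter U' ∧ IsPrimeFilter V' ∧ U' ⊆ U ∧ V ⊆ V' ∧
      (∀ a : A, a ∈ V' → dia a ∈ U') ∧ (∀ a : A, box a ∈ U' → a ∈ V') := by
  obtain ⟨V', hV', hVV', hV'U, hmax⟩ := exists_isPrimeFilter_superset_dia_mem hd1 hd2 hU hV hUV
  obtain ⟨U', hU', hU'U, hV'U', hboxV'⟩ :=
    exists_isPrimeFilter_subset_box_mem hb1 hd1 hax hU hV' hV'U hmax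
  exact ⟨U', V', hU', hV', hU'U, hVV', hV'U', hboxV'⟩

theorem stmt12 {A : Type*} [DistribLattice A] [BoundedOrder A]
    (box dia : A → A)
    (hb1 : ∀ a b : A, box (a ⊓ b) = box a ⊓ box b) (hb2 : box ⊤ = ⊤)
    (hd1 : ∀ a b : A, dia (a ⊔ b) = dia a ⊔ dia b) (hd2 : dia ⊥ = ⊥)
    (hax : ∀ a b c : A, dia a ≤ box b ⊔ c → dia a ≤ dia (a ⊓ b) ⊔ c)
    (U V : Set A) (hU : IsPrimeFilter U) (hV : IsPrimeFilter V)
    (hUV : ∀ a : A, a ∈ V → dia a ∈ U) :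
    ∃ U' V' : Set A, IsPrimeFilter U' ∧ IsPrimeFilter V' ∧ U' ⊆ U ∧ V ⊆ V' ∧
      (∀ a : A, a ∈ V' → dia a ∈ U') ∧ (∀ a : A, box a ∈ U' → a ∈ V') :=
  stmt12_general box dia hb1 hd1 hd2 hax U V hU hV hUV
end
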